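/- arXiv:2210.00387 — 2 statements merged into one kernel-verified Lean document; each statement's English description precedes it below -/
import Mathlib

section
/- Let A be a unital C*-algebra and L a Lip-norm on A (a seminorm with values in [0,∞], dense finite domain, vanishing exactly on scalars, whose induced metric d_L(μ,ν) = sup{|μ(a)-ν(a)| : L(a) ≤ 1} metrizes the weak-* topology on the state space). Let (H,π) be a faithful *-representation of A and K a dense subspace of H. Then for every state μ on A and every ε > 0 there exists a finite convex combination ν of vector states given by unit vectors in K such that |μ(a) - ν(a)| ≤ ε·L(a) for all a ∈ A. -/
open scoped ENNReal NNReal ComplexOrder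

noncomputable section

/-- A state on a unital C*-algebra: a unital positive continuous linear functional. -/
def IsState {A : Type*} [NormedRing A] [NormedAlgebra ℂ A] [StarRing A]
    (μ : A →L[ℂ] ℂ) : Prop :=
  μ 1 = 1 ∧ ∀ a : A, 0 ≤ μ (star a * a)

/-!
If the real values of `μ` on finitely many self-adjoint `gᵢ` lay outside the closed convex hull
of the corresponding values of the vector states of unit vectors of `K`, a separating functional
would produce a self-adjoint `a = ∑ cᵢ gᵢ` and `u` with `re ⟪ξ, π a ξ⟫ ≤ u ‖ξ‖²` on `K`, hence on
all of `H`; faithfulness of `π` then gives `a ≤ u • 1`, contradicting `u < re (μ a)`. So `μ` can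
be approximated to within `ε / 6` on the real parts of an `ε / 6`-net (modulo scalars) of the
self-adjoint part of the `L`-unit ball by such a convex combination `ν`. Both are states, so they
agree on scalars and are contractive on self-adjoint elements, whence `|μ x - ν x| ≤ ε / 2` when
`L x ≤ 1`; rescaling and splitting `a` into real and imaginary parts gives `ε L a`.
-/

open ComplexStarModule

section States

variable {A : Type*} [NormedRing A] [NormedAlgebra ℂ A] [StarRing A] {μ : A →L[ℂ] ℂ}

lemma IsState.map_smul_one (hμ : IsState μ) (z : ℂ) : μ (z • 1) = z := by
  simp [hμ.1]

lemma IsState.map_algebraMap (hμ : IsState μ) (r : ℝ) : μ (algebraMap ℝ A r) = r := by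
  simp [Algebra.algebraMap_eq_smul_one, hμ.1]

lemma isState_sum_smul {ι : Type*} {s : Finset ι} {t : ι → ℝ} {μ : ι → A →L[ℂ] ℂ}
    (ht : ∀ i ∈ s, 0 ≤ t i) (hsum : ∑ i ∈ s, t i = 1) (hμ : ∀ i ∈ s, IsState (μ i)) :
    IsState (∑ i ∈ s, (t i : ℂ) • μ i) := by
  refine ⟨?_, fun a => ?_⟩
  · simp only [sum_apply, smul_apply, smul_eq_mul]
    rw [Finset.sum_congr rfl fun i hi => by rw [(hμ i hi).1, mul_one]]
    exact_mod_cast hsum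
  · simp only [sum_apply, smul_apply, smul_eq_mul]
    exact Finset.sum_nonneg fun i hi =>
      mul_nonneg (Complex.zero_le_real.mpr (ht i hi)) ((hμ i hi).2 a)

end States

section CStarStates

variable {A : Type*} [CStarAlgebra A] [PartialOrder A] [StarOrderedRing A] {μ : A →L[ℂ] ℂ}

lemma IsState.mono (hμ : IsState μ) {a b : A} (hab : a ≤ b) : μ a ≤ μ b := by
  obtain ⟨c, hc⟩ := CStarAlgebra.nonneg_iff_eq_star_mul_self.mp (sub_nonneg.mpr hab)
  have := hμ.2 c
  rwa [← hc, map_sub, sub_nonneg] at this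

lemma IsState.ofReal_re_apply_and_abs_re_apply_le (hμ : IsState μ) {x : A}
    (hx : IsSelfAdjoint x) : ((μ x).re : ℂ) = μ x ∧ |(μ x).re| ≤ ‖x‖ := by
  have hle := hμ.mono hx.le_algebraMap_norm_self
  have hge := hμ.mono hx.neg_algebraMap_norm_le_self
  rw [hμ.map_algebraMap, Complex.le_def] at hle
  rw [map_neg, hμ.map_algebraMap, Complex.le_def] at hge
  simp only [Complex.ofReal_re, Complex.ofReal_im, Complex.neg_re, Complex.neg_im] at hle hge
  exact ⟨Complex.ext (by simp) (by simp [hle.2]), abs_le.mpr ⟨hge.1, hle.1⟩⟩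

lemma IsState.ofReal_re_apply (hμ : IsState μ) {x : A} (hx : IsSelfAdjoint x) :
    ((μ x).re : ℂ) = μ x :=
  (hμ.ofReal_re_apply_and_abs_re_apply_le hx).1

lemma IsState.norm_apply_le (hμ : IsState μ) {x : A} (hx : IsSelfAdjoint x) : ‖μ x‖ ≤ ‖x‖ := by
  obtain ⟨hreal, hbound⟩ := hμ.ofReal_re_apply_and_abs_re_apply_le hx
  rwa [← hreal, Complex.norm_real, Real.norm_eq_abs]

lemma IsState.norm_sub_apply_le_of_near_realPart {ν : A →L[ℂ] ℂ} (hμ : IsState μ)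
    (hν : IsState ν) {x b : A} {s δ : ℝ} (hx : IsSelfAdjoint x) (hxb : ‖x - b - (s : ℂ) • 1‖ ≤ δ)
    (hb : ‖μ (ℜ b) - ν (ℜ b)‖ ≤ δ) : ‖μ x - ν x‖ ≤ 3 * δ := by
  set d : A := ↑(ℜ (x - b - (s : ℂ) • 1))
  have hd : ‖d‖ ≤ δ := (realPart.norm_le _).trans hxb
  have hxd : x = d + ℜ b + (s : ℂ) • 1 := by
    simp only [d, Complex.coe_smul, map_sub, map_smul, realPart_one, AddSubgroupClass.coe_sub,
      hx.coe_realPart, selfAdjoint.val_smul, selfAdjoint.val_one]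
    abel
  have hsplit : μ x - ν x = (μ d - ν d) + (μ (ℜ b) - ν (ℜ b)) := by
    rw [hxd]
    simp only [map_add, hμ.map_smul_one, hν.map_smul_one]
    ring
  calc ‖μ x - ν x‖ ≤ ‖μ d‖ + ‖ν d‖ + ‖μ (ℜ b) - ν (ℜ b)‖ := by
        rw [hsplit]; exact (norm_add_le _ _).trans (by gcongr; exact norm_sub_le _ _)
    _ ≤ δ + δ + δ := by
        gcongr
        exacts [(hμ.norm_apply_le (ℜ _).2).trans hd, (hν.norm_apply_le (ℜ _).2).trans hd]
    _ = 3 * δ := by ring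

end CStarStates

section FaithfulHom

variable {A B : Type*} [CStarAlgebra A] [PartialOrder A] [StarOrderedRing A]
  [CStarAlgebra B] [PartialOrder B] [StarOrderedRing B]

lemma StarAlgHom.le_of_map_le_of_injective {φ : A →⋆ₐ[ℂ] B} (hφ : Function.Injective φ)
    {a b : A} (ha : IsSelfAdjoint a) (hb : IsSelfAdjoint b) (hab : φ a ≤ φ b) : a ≤ b := by
  have hsa : IsSelfAdjoint (b - a) := hb.sub ha
  rw [← sub_nonneg, StarOrderedRing.nonneg_iff_spectrum_nonneg (R := ℝ) _ hsa,
    ← hsa.map_spectrum_real φ hφ, ← StarOrderedRing.nonneg_iff_spectrum_nonneg _ (hsa.map φ),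
    map_sub, sub_nonneg]
  exact hab

end FaithfulHom

section Operators

variable {H : Type*} [NormedAddCommGroup H] [InnerProductSpace ℂ H]

lemma ContinuousLinearMap.le_smul_one_of_re_inner_le [CompleteSpace H] {T : H →L[ℂ] H}
    (hT : IsSelfAdjoint T) {u : ℝ} (h : ∀ ξ, (inner ℂ ξ (T ξ)).re ≤ u * ‖ξ‖ ^ 2) : T ≤ (u : ℂ) • 1 := by
  have : 0 ≤ (u : ℂ) • 1 - T := by
    rw [ContinuousLinearMap.nonneg_iff_isPositive, ContinuousLinearMap.isPositive_def']
    refine ⟨?_, fun ξ => ?_⟩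
    · exact (IsSelfAdjoint.smul (Complex.conj_ofReal u) (.one _)).sub hT
    · rw [ContinuousLinearMap.reApplyInnerSelf_apply, inner_re_symm]
      simpa [inner_sub_right, ← Complex.ofReal_pow] using h ξ
  exact sub_nonneg.mp this

lemma ContinuousLinearMap.re_inner_le_of_dense {T : H →L[ℂ] H} {K : Submodule ℂ H}
    (hK : Dense (K : Set H)) {u : ℝ} (h : ∀ ξ ∈ K, ‖ξ‖ = 1 → (inner ℂ ξ (T ξ)).re ≤ u)
    (ξ : H) : (inner ℂ ξ (T ξ)).re ≤ u * ‖ξ‖ ^ 2 := by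
  have hscale : ∀ (c : ℝ) (ξ : H),
      (inner ℂ ((c : ℂ) • ξ) (T ((c : ℂ) • ξ))).re = c ^ 2 * (inner ℂ ξ (T ξ)).re := by
    intro c ξ
    rw [map_smul, inner_smul_left, inner_smul_right, Complex.conj_ofReal, ← mul_assoc,
      ← Complex.ofReal_mul, Complex.re_ofReal_mul, sq]
  refine hK.induction (fun ξ hξ => ?_) ?_ ξ
  · rcases eq_or_ne ξ 0 with rfl | hne
    · simp
    have hpos : 0 < ‖ξ‖ := norm_pos_iff.mpr hne
    have hunit := h _ (K.smul_mem ((‖ξ‖⁻¹ : ℝ) : ℂ) hξ) (by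
      rw [norm_smul, Complex.norm_real, norm_inv, norm_norm, inv_mul_cancel₀ hpos.ne'])
    rw [hscale, inv_pow, inv_mul_le_iff₀ (by positivity)] at hunit
    linarith
  · exact isClosed_le (by fun_prop) (by fun_prop)

end Operators

section VectorStates

variable {A H : Type*} [CStarAlgebra A]
  [NormedAddCommGroup H] [InnerProductSpace ℂ H] [CompleteSpace H]

def vectorState (π : A →⋆ₐ[ℂ] (H →L[ℂ] H)) (ξ : H) : A →L[ℂ] ℂ :=
  LinearMap.mkContinuous
    { toFun := fun a => inner ℂ ξ (π a ξ)
      map_add' := fun a b => by simp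
      map_smul' := fun z a => by simp }
    (‖ξ‖ * ‖ξ‖) fun a => calc
      ‖inner ℂ ξ (π a ξ)‖ ≤ ‖ξ‖ * (‖π a‖ * ‖ξ‖) :=
        (norm_inner_le_norm _ _).trans (by gcongr; exact (π a).le_opNorm ξ)
      _ ≤ ‖ξ‖ * (‖a‖ * ‖ξ‖) := by gcongr; exact NonUnitalStarAlgHom.norm_apply_le π a
      _ = ‖ξ‖ * ‖ξ‖ * ‖a‖ := by ring

@[simp]
lemma vectorState_apply (π : A →⋆ₐ[ℂ] (H →L[ℂ] H)) (ξ : H) (a : A) :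
    vectorState π ξ a = inner ℂ ξ (π a ξ) :=
  rfl

lemma isState_vectorState (π : A →⋆ₐ[ℂ] (H →L[ℂ] H)) {ξ : H} (hξ : ‖ξ‖ = 1) :
    IsState (vectorState π ξ) := by
  refine ⟨by simp [hξ], fun a => ?_⟩
  rw [vectorState_apply, map_mul, map_star, mul_apply_eq_comp,
    ContinuousLinearMap.star_eq_adjoint, ContinuousLinearMap.adjoint_inner_right,
    inner_self_eq_norm_sq_to_K]
  positivity

end VectorStates

section Faithful

variable {A H : Type*} [CStarAlgebra A] [PartialOrder A] [StarOrderedRing A]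
  [NormedAddCommGroup H] [InnerProductSpace ℂ H] [CompleteSpace H]
  {π : A →⋆ₐ[ℂ] (H →L[ℂ] H)} {μ : A →L[ℂ] ℂ}

lemma IsState.re_apply_le_of_vectorState_le (hμ : IsState μ) (hπ : Function.Injective π)
    {K : Submodule ℂ H} (hK : Dense (K : Set H)) {a : A} (ha : IsSelfAdjoint a) {u : ℝ}
    (h : ∀ ξ ∈ K, ‖ξ‖ = 1 → (vectorState π ξ a).re ≤ u) : (μ a).re ≤ u := by
  have hle : π a ≤ π ((u : ℂ) • 1) := by
    rw [map_smul, map_one]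
    exact ContinuousLinearMap.le_smul_one_of_re_inner_le (ha.map π)
      (ContinuousLinearMap.re_inner_le_of_dense hK h)
  have := hμ.mono (StarAlgHom.le_of_map_le_of_injective hπ ha
    (IsSelfAdjoint.smul (Complex.conj_ofReal u) (.one _)) hle)
  rw [hμ.map_smul_one, Complex.le_def] at this
  exact this.1

end Faithful

section Fell

variable {A H : Type*} [CStarAlgebra A] [PartialOrder A] [StarOrderedRing A]
  [NormedAddCommGroup H] [InnerProductSpace ℂ H] [CompleteSpace H]
  {π : A →⋆ₐ[ℂ] (H →L[ℂ] H)} {μ : A →L[ℂ] ℂ} {K : Submodule ℂ H}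
  {ι : Type*} [Fintype ι] {g : ι → A}

lemma IsState.mem_closure_convexHull_vectorStates (hμ : IsState μ) (hπ : Function.Injective π)
    (hK : Dense (K : Set H)) (hg : ∀ i, IsSelfAdjoint (g i)) :
    (fun i => (μ (g i)).re) ∈ closure (convexHull ℝ
      ((fun ξ i => (vectorState π ξ (g i)).re) '' {ξ | ξ ∈ K ∧ ‖ξ‖ = 1})) := by
  classical
  by_contra hnot
  obtain ⟨f, u, hfu, hμu⟩ :=
    geometric_hahn_banach_closed_point (convex_convexHull ℝ _).closure isClosed_closure hnot
  set c : ι → ℝ := fun i => f fun j => if i = j then 1 else 0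
  have hf : ∀ p, f p = ∑ i, p i * c i := fun p => by
    simpa [smul_eq_mul] using f.toLinearMap.pi_apply_eq_sum_univ p
  have hre : ∀ φ : A →L[ℂ] ℂ, (φ (∑ i, c i • g i)).re = ∑ i, (φ (g i)).re * c i := by
    intro φ
    simp [map_sum, mul_comm]
  have := hμ.re_apply_le_of_vectorState_le hπ hK (u := u)
    (isSelfAdjoint_sum _ fun i _ => (IsSelfAdjoint.all (c i)).smul (hg i)) fun ξ hξ hξ1 => by
      rw [hre, ← hf]
      exact (hfu _ (subset_closure (subset_convexHull ℝ _ ⟨ξ, ⟨hξ, hξ1⟩, rfl⟩))).le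
  rw [hre, ← hf] at this
  linarith

lemma IsState.exists_sum_vectorState_near (hμ : IsState μ) (hπ : Function.Injective π)
    (hK : Dense (K : Set H)) (hg : ∀ i, IsSelfAdjoint (g i)) {δ : ℝ} (hδ : 0 < δ) :
    ∃ (n : ℕ) (t : Fin n → ℝ) (ξ : Fin n → H),
      (∀ i, 0 ≤ t i) ∧ (∑ i, t i = 1) ∧ (∀ i, ξ i ∈ K ∧ ‖ξ i‖ = 1) ∧
      ∀ j, ‖μ (g j) - (∑ i, (t i : ℂ) • vectorState π (ξ i)) (g j)‖ ≤ δ := by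
  obtain ⟨p, hp, hdist⟩ :=
    Metric.mem_closure_iff.mp (hμ.mem_closure_convexHull_vectorStates hπ hK hg) δ hδ
  obtain ⟨κ, _, w, z, hw0, hw1, hz, hwz⟩ := mem_convexHull_iff_exists_fintype.mp hp
  choose ξ hξ hξz using hz
  set e := (Fintype.equivFin κ).symm
  have hν : IsState (∑ i, (w (e i) : ℂ) • vectorState π (ξ (e i))) :=
    isState_sum_smul (fun i _ => hw0 _) (by rwa [e.sum_comp w])
      fun i _ => isState_vectorState π (hξ _).2
  refine ⟨_, fun i => w (e i), fun i => ξ (e i), fun i => hw0 _, by rwa [e.sum_comp w],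
    fun i => hξ _, fun j => ?_⟩
  have hνp : ((∑ i, (w (e i) : ℂ) • vectorState π (ξ (e i))) (g j)).re = p j := by
    rw [← hwz, ← e.sum_comp]
    simp [← hξz]
  rw [← hμ.ofReal_re_apply (hg j), ← hν.ofReal_re_apply (hg j), hνp, ← Complex.ofReal_sub,
    Complex.norm_real, ← dist_eq_norm]
  exact (dist_le_pi_dist _ p j).trans hdist.le

end Fell

section LipNorm

variable {A : Type*} [AddCommGroup A] [Module ℂ A] [StarAddMonoid A] [StarModule ℂ A]
  {L : A → ℝ≥0∞}

lemma apply_realPart_le (hLstar : ∀ a, L (star a) = L a) (hLadd : ∀ a b, L (a + b) ≤ L a + L b)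
    (hLsmul : ∀ (z : ℂ) a, L (z • a) = ‖z‖₊ * L a) (a : A) : L (ℜ a) ≤ L a := by
  rw [realPart_apply_coe, ← Complex.coe_smul, hLsmul]
  calc _ ≤ (‖((2⁻¹ : ℝ) : ℂ)‖₊ : ℝ≥0∞) * (L a + L (star a)) := by gcongr; exact hLadd _ _
    _ = L a := by
      rw [hLstar, ← two_mul, ← mul_assoc]
      simp [ENNReal.inv_mul_cancel]

lemma apply_imaginaryPart_le (hLstar : ∀ a, L (star a) = L a)
    (hLadd : ∀ a b, L (a + b) ≤ L a + L b) (hLsmul : ∀ (z : ℂ) a, L (z • a) = ‖z‖₊ * L a)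
    (a : A) : L (ℑ a) ≤ L a := by
  have : (ℑ a : A) = ℜ (-Complex.I • a) := by simp [realPart_smul]
  rw [this]
  exact (apply_realPart_le hLstar hLadd hLsmul _).trans (by rw [hLsmul]; simp)

lemma enorm_apply_le_mul_of_forall_le_one (hLsmul : ∀ (z : ℂ) a, L (z • a) = ‖z‖₊ * L a)
    {f : A →ₗ[ℂ] ℂ} {C : ℝ≥0} (hC : C ≠ 0)
    (h : ∀ x, IsSelfAdjoint x → L x ≤ 1 → ‖f x‖ₑ ≤ C) {x : A} (hx : IsSelfAdjoint x) :
    ‖f x‖ₑ ≤ C * L x := by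
  rcases eq_or_ne (L x) ⊤ with hLx | hLx
  · simp [hLx, ENNReal.mul_top, hC]
  have hscaled : ∀ r : ℝ≥0, L x < r → ‖f x‖ₑ ≤ C * r := by
    intro r hr
    have hr0 : (r : ℝ≥0∞) ≠ 0 := (pos_of_gt hr).ne'
    have hz : ‖(((r⁻¹ : ℝ≥0) : ℝ) : ℂ)‖ₑ = (r : ℝ≥0∞)⁻¹ := by
      rw [enorm_eq_nnnorm]
      simp [ENNReal.coe_inv (by simpa using hr0)]
    have hL : L (((r⁻¹ : ℝ≥0) : ℝ) • x) ≤ 1 := by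
      rw [← Complex.coe_smul, hLsmul, ← enorm_eq_nnnorm, hz,
        ENNReal.inv_mul_le_iff hr0 ENNReal.coe_ne_top, mul_one]
      exact hr.le
    have := h _ ((IsSelfAdjoint.all _).smul hx) hL
    rwa [← Complex.coe_smul, map_smul, enorm_smul, hz,
      ENNReal.inv_mul_le_iff hr0 ENNReal.coe_ne_top, mul_comm] at this
  rw [mul_comm, ← ENNReal.div_le_iff (by simpa) ENNReal.coe_ne_top]
  refine le_of_forall_gt_imp_ge_of_dense fun r hr => ?_
  rcases eq_or_ne r ⊤ with rfl | hr_top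
  · exact le_top
  lift r to ℝ≥0 using hr_top
  rw [ENNReal.div_le_iff (by simpa) ENNReal.coe_ne_top, mul_comm]
  exact hscaled r hr

lemma enorm_apply_le_two_mul_of_isSelfAdjoint (hLstar : ∀ a, L (star a) = L a)
    (hLadd : ∀ a b, L (a + b) ≤ L a + L b) (hLsmul : ∀ (z : ℂ) a, L (z • a) = ‖z‖₊ * L a)
    {f : A →ₗ[ℂ] ℂ} {C : ℝ≥0∞} (h : ∀ x, IsSelfAdjoint x → ‖f x‖ₑ ≤ C * L x) (a : A) :
    ‖f a‖ₑ ≤ 2 * C * L a := by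
  calc ‖f a‖ₑ = ‖f (ℜ a) + Complex.I * f (ℑ a)‖ₑ := by
        rw [← smul_eq_mul, ← map_smul, ← map_add, realPart_add_I_smul_imaginaryPart]
    _ ≤ ‖f (ℜ a)‖ₑ + ‖f (ℑ a)‖ₑ := by
        refine (enorm_add_le _ _).trans ?_
        simp [enorm_eq_nnnorm]
    _ ≤ C * L (ℜ a) + C * L (ℑ a) := add_le_add (h _ (ℜ a).2) (h _ (ℑ a).2)
    _ ≤ C * L a + C * L a := by
        gcongr
        exacts [apply_realPart_le hLstar hLadd hLsmul a,
          apply_imaginaryPart_le hLstar hLadd hLsmul a]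
    _ = 2 * C * L a := by ring

end LipNorm

theorem stmt1_general {A H : Type*}
    [NormedRing A] [StarRing A] [CStarRing A] [NormedAlgebra ℂ A] [StarModule ℂ A]
    [CompleteSpace A]
    [NormedAddCommGroup H] [InnerProductSpace ℂ H] [CompleteSpace H]
    (π : A →⋆ₐ[ℂ] (H →L[ℂ] H)) (hπ : Function.Injective π)
    (K : Submodule ℂ H) (hK : Dense (K : Set H))
    (L : A → ℝ≥0∞)
    (hLstar : ∀ a : A, L (star a) = L a)
    (hLadd : ∀ a b : A, L (a + b) ≤ L a + L b)
    (hLsmul : ∀ (z : ℂ) (a : A), L (z • a) = (‖z‖₊ : ℝ≥0∞) * L a)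
    -- Rieffel's criterion: the image of `{a sa | L a ≤ 1}` in `A/ℂ1` is totally bounded,
    -- equivalently the metric `d_L` metrizes the weak-* topology on the state space
    (hLtb : ∀ ε : ℝ, 0 < ε → ∃ F : Finset A, ∀ a : A, star a = a → L a ≤ 1 →
      ∃ b ∈ F, ∃ t : ℝ, ‖a - b - (t : ℂ) • (1 : A)‖ ≤ ε)
    (μ : A →L[ℂ] ℂ) (hμ : IsState μ) (ε : ℝ≥0) (hε : 0 < ε) :
    ∃ (n : ℕ) (t : Fin n → ℝ) (ξ : Fin n → H),
      (∀ i, 0 ≤ t i) ∧ (∑ i, t i = 1) ∧ (∀ i, ξ i ∈ K ∧ ‖ξ i‖ = 1) ∧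
      ∀ a : A,
        (‖μ a - ∑ i, (t i : ℂ) * (inner ℂ (ξ i) (π a (ξ i)) : ℂ)‖₊ : ℝ≥0∞) ≤
          (ε : ℝ≥0∞) * L a := by
  let : CStarAlgebra A := { }
  let : PartialOrder A := CStarAlgebra.spectralOrder A
  let : StarOrderedRing A := CStarAlgebra.spectralOrderedRing A
  obtain ⟨F, hF⟩ := hLtb (ε / 6 : ℝ≥0) (by positivity)
  obtain ⟨n, t, ξ, ht0, ht1, hξ, hnear⟩ := hμ.exists_sum_vectorState_near hπ hK
    (g := fun b : F => (ℜ (b : A) : A)) (fun b => (ℜ (b : A)).2) (δ := (ε / 6 : ℝ≥0))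
    (by positivity)
  set ν := ∑ i, (t i : ℂ) • vectorState π (ξ i)
  have hν : IsState ν :=
    isState_sum_smul (fun i _ => ht0 i) ht1 fun i _ => isState_vectorState π (hξ i).2
  have hunit : ∀ x, IsSelfAdjoint x → L x ≤ 1 →
      ‖(μ - ν : A →L[ℂ] ℂ).toLinearMap x‖ₑ ≤ (ε / 2 : ℝ≥0) := by
    intro x hx hLx
    obtain ⟨b, hb, s, hxb⟩ := hF x hx hLx
    have := hμ.norm_sub_apply_le_of_near_realPart hν hx hxb (hnear ⟨b, hb⟩)
    rw [enorm_eq_nnnorm, ENNReal.coe_le_coe, ← NNReal.coe_le_coe]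
    push_cast at this ⊢
    rw [LinearMap.sub_apply, ContinuousLinearMap.coe_coe, ContinuousLinearMap.coe_coe]
    linarith
  refine ⟨n, t, ξ, ht0, ht1, hξ, fun a => ?_⟩
  have := enorm_apply_le_two_mul_of_isSelfAdjoint hLstar hLadd hLsmul
    (fun x hx => enorm_apply_le_mul_of_forall_le_one hLsmul (by positivity) hunit hx) a
  convert this using 2
  · simp [ν, enorm_eq_nnnorm]
  · rw [← ENNReal.coe_ofNat, ← ENNReal.coe_mul, mul_div_cancel₀ _ two_ne_zero]

/-- Let `A` be a unital C*-algebra and `L` a Lip-norm on `A` (a `[0,∞]`-valued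
seminorm with dense finite domain, vanishing exactly on scalars, lower semicontinuous, and
satisfying Rieffel's total-boundedness criterion, equivalent to the induced metric metrizing
the weak-* topology on the state space).  Let `(H, π)` be a faithful `*`-representation of `A`
and `K` a dense subspace of `H`.  Then for every state `μ` on `A` and every `ε > 0` there is a
finite convex combination `ν` of vector states coming from unit vectors in `K` such that
`|μ(a) − ν(a)| ≤ ε·L(a)` for all `a ∈ A`. -/
theorem stmt1 {A H : Type*}
    [NormedRing A] [StarRing A] [CStarRing A] [NormedAlgebra ℂ A] [StarModule ℂ A]
    [CompleteSpace A]
    [NormedAddCommGroup H] [InnerProductSpace ℂ H] [CompleteSpace H]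
    (π : A →⋆ₐ[ℂ] (H →L[ℂ] H)) (hπ : Function.Injective π)
    (K : Submodule ℂ H) (hK : Dense (K : Set H))
    (L : A → ℝ≥0∞)
    (hLstar : ∀ a : A, L (star a) = L a)
    (hL0 : ∀ a : A, L a = 0 ↔ ∃ z : ℂ, a = z • (1 : A))
    (hLadd : ∀ a b : A, L (a + b) ≤ L a + L b)
    (hLsmul : ∀ (z : ℂ) (a : A), L (z • a) = (‖z‖₊ : ℝ≥0∞) * L a)
    (hLdense : Dense {a : A | L a < ⊤})
    (hLlsc : LowerSemicontinuous L)
    -- Rieffel's criterion: the image of `{a sa | L a ≤ 1}` in `A/ℂ1` is totally bounded,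
    -- equivalently the metric `d_L` metrizes the weak-* topology on the state space
    (hLtb : ∀ ε : ℝ, 0 < ε → ∃ F : Finset A, ∀ a : A, star a = a → L a ≤ 1 →
      ∃ b ∈ F, ∃ t : ℝ, ‖a - b - (t : ℂ) • (1 : A)‖ ≤ ε)
    (μ : A →L[ℂ] ℂ) (hμ : IsState μ) (ε : ℝ≥0) (hε : 0 < ε) :
    ∃ (n : ℕ) (t : Fin n → ℝ) (ξ : Fin n → H),
      (∀ i, 0 ≤ t i) ∧ (∑ i, t i = 1) ∧ (∀ i, ξ i ∈ K ∧ ‖ξ i‖ = 1) ∧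
      ∀ a : A,
        (‖μ a - ∑ i, (t i : ℂ) * (inner ℂ (ξ i) (π a (ξ i)) : ℂ)‖₊ : ℝ≥0∞) ≤
          (ε : ℝ≥0∞) * L a :=
  stmt1_general π hπ K hK L hLstar hLadd hLsmul hLtb μ hμ ε hε
end
end

section
/- Let α be an action of a coamenable compact quantum group (A, Δ) on a unital C*-algebra B, with continuous coidentity ε ∈ S(A). For a state ν ∈ S(A) define P_ν : B → B by P_ν(b) = (id_B ⊗ ν)α(b). Suppose L^A is a right-invariant regular Lip-norm on A, L^B(b) = sup_{φ∈S(B)} L^A((φ⊗id)α(b)), and ν satisfies |ε(a) − ν(a)| ≤ ε₀·L^A(a) for all a ∈ A (for some ε₀ > 0). Then for every self-adjoint b ∈ B: ‖b − P_ν(b)‖ ≤ ε₀·L^B(b). -/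
open scoped ComplexOrder ENNReal NNReal

noncomputable section

/-- An abstract model of the minimal C*-tensor product `T = A ⊗ B` of two unital
C*-algebras: a bilinear map `tmul` with dense span, multiplicative and `*`-compatible,
together with product functionals `μ ⊗ ν` (of norm `‖μ‖·‖ν‖`, as on the minimal tensor
product) and the two slice maps. -/
structure TensorData (A B T : Type*)
    [NormedRing A] [NormedAlgebra ℂ A] [StarRing A]
    [NormedRing B] [NormedAlgebra ℂ B] [StarRing B]
    [NormedRing T] [NormedAlgebra ℂ T] [StarRing T] where
  tmul : A →ₗ[ℂ] B →ₗ[ℂ] T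
  tmul_mul : ∀ (a a' : A) (b b' : B), tmul a b * tmul a' b' = tmul (a * a') (b * b')
  tmul_star : ∀ (a : A) (b : B), star (tmul a b) = tmul (star a) (star b)
  tmul_one : tmul 1 1 = 1
  tmul_norm : ∀ (a : A) (b : B), ‖tmul a b‖ = ‖a‖ * ‖b‖
  dense : Dense (↑(Submodule.span ℂ {x : T | ∃ a b, x = tmul a b}) : Set T)
  fmul : (A →L[ℂ] ℂ) → (B →L[ℂ] ℂ) → (T →L[ℂ] ℂ)
  fmul_apply : ∀ μ ν a b, fmul μ ν (tmul a b) = μ a * ν b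
  fmul_norm : ∀ μ ν, ‖fmul μ ν‖ = ‖μ‖ * ‖ν‖
  sliceL : (A →L[ℂ] ℂ) → (T →L[ℂ] B)   -- `μ ⊗ id`
  sliceL_apply : ∀ μ a b, sliceL μ (tmul a b) = μ a • b
  sliceR : (B →L[ℂ] ℂ) → (T →L[ℂ] A)   -- `id ⊗ ν`
  sliceR_apply : ∀ ν a b, sliceR ν (tmul a b) = ν b • a
  fmul_sliceL : ∀ μ ν x, fmul μ ν x = ν (sliceL μ x)
  fmul_sliceR : ∀ μ ν x, fmul μ ν x = μ (sliceR ν x)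

/-- An abstract model of a compact quantum group: a unital C*-algebra `A` with a
coassociative unital `*`-homomorphism `Δ : A → A ⊗ A` (minimal tensor product, modelled by
`TensorData`) satisfying the cancellation property. -/
structure CoMulData (A AA AAA : Type*)
    [NormedRing A] [NormedAlgebra ℂ A] [StarRing A]
    [NormedRing AA] [NormedAlgebra ℂ AA] [StarRing AA]
    [NormedRing AAA] [NormedAlgebra ℂ AAA] [StarRing AAA] where
  t : TensorData A A AA          -- `A ⊗ A`
  tL : TensorData AA A AAA       -- `(A ⊗ A) ⊗ A`
  tR : TensorData A AA AAA       -- `A ⊗ (A ⊗ A)`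
  assoc : ∀ (a b c : A), tL.tmul (t.tmul a b) c = tR.tmul a (t.tmul b c)
  delta : A →⋆ₐ[ℂ] AA
  delta_cont : Continuous ⇑delta
  deltaL : AA →ₗ[ℂ] AAA          -- `Δ ⊗ id`
  deltaL_apply : ∀ a b, deltaL (t.tmul a b) = tL.tmul (delta a) b
  deltaR : AA →ₗ[ℂ] AAA          -- `id ⊗ Δ`
  deltaR_apply : ∀ a b, deltaR (t.tmul a b) = tR.tmul a (delta b)
  coassoc : ∀ a, deltaL (delta a) = deltaR (delta a)
  cancel_left : Dense
    (↑(Submodule.span ℂ {x : AA | ∃ a b, x = t.tmul a 1 * delta b}) : Set AA)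
  cancel_right : Dense
    (↑(Submodule.span ℂ {x : AA | ∃ a b, x = t.tmul 1 a * delta b}) : Set AA)

/-- Convolution of continuous linear functionals: `μ * ν = (μ ⊗ ν) ∘ Δ`. -/
noncomputable def CoMulData.conv {A AA AAA : Type*}
    [NormedRing A] [NormedAlgebra ℂ A] [StarRing A]
    [NormedRing AA] [NormedAlgebra ℂ AA] [StarRing AA]
    [NormedRing AAA] [NormedAlgebra ℂ AAA] [StarRing AAA]
    (D : CoMulData A AA AAA) (μ ν : A →L[ℂ] ℂ) : A →L[ℂ] ℂ :=
  (D.t.fmul μ ν).comp ⟨D.delta.toAlgHom.toLinearMap, D.delta_cont⟩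

/-- An abstract model of a (left) action `α : B → B ⊗ A` of a compact quantum group
`(A, Δ)` on a unital C*-algebra `B`: an injective unital `*`-homomorphism satisfying
`(α ⊗ id)∘α = (id ⊗ Δ)∘α` and such that the span of `α(B)(1_B ⊗ A)` is dense in `B ⊗ A`. -/
structure ActionData (A AA AAA B BA BAA : Type*)
    [NormedRing A] [NormedAlgebra ℂ A] [StarRing A]
    [NormedRing AA] [NormedAlgebra ℂ AA] [StarRing AA]
    [NormedRing AAA] [NormedAlgebra ℂ AAA] [StarRing AAA]
    [NormedRing B] [NormedAlgebra ℂ B] [StarRing B]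
    [NormedRing BA] [NormedAlgebra ℂ BA] [StarRing BA]
    [NormedRing BAA] [NormedAlgebra ℂ BAA] [StarRing BAA] where
  Q : CoMulData A AA AAA
  tBA : TensorData B A BA        -- `B ⊗ A`
  alpha : B →⋆ₐ[ℂ] BA
  alpha_cont : Continuous ⇑alpha
  alpha_inj : Function.Injective ⇑alpha
  tBAA : TensorData BA A BAA     -- `(B ⊗ A) ⊗ A`
  tBAA' : TensorData B AA BAA    -- `B ⊗ (A ⊗ A)`
  assocBA : ∀ (b : B) (a a' : A),
    tBAA.tmul (tBA.tmul b a) a' = tBAA'.tmul b (Q.t.tmul a a')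
  alphaExt : BA →ₗ[ℂ] BAA        -- `α ⊗ id`
  alphaExt_apply : ∀ b a, alphaExt (tBA.tmul b a) = tBAA.tmul (alpha b) a
  deltaExt : BA →ₗ[ℂ] BAA        -- `id ⊗ Δ`
  deltaExt_apply : ∀ b a, deltaExt (tBA.tmul b a) = tBAA'.tmul b (Q.delta a)
  action_eq : ∀ b, alphaExt (alpha b) = deltaExt (alpha b)
  cancelBA : Dense
    (↑(Submodule.span ℂ {x : BA | ∃ b a, x = alpha b * tBA.tmul 1 a}) : Set BA)

/-!
For self-adjoint `b`, the element `P_ν b` is self-adjoint as well (states are hermitian), so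
`‖b - P_ν b‖ = |φ (b - P_ν b)|` for some state `φ` of `B`. Writing `c = (φ ⊗ id) α b`, slicing
gives `φ (P_ν b) = ν c`, and the coidentity gives `φ b = ε c`; hence
`‖b - P_ν b‖ = |ε c - ν c| ≤ ε₀ L^A(c) ≤ ε₀ L^B(b)`.

The norming state is obtained from a character of the C*-algebra generated by `b - P_ν b` that
evaluates it at a spectral value of maximal modulus, extended by Hahn–Banach; a unital
functional of norm one on a C*-algebra is positive.
-/

open ComplexConjugate ComplexStarModule Complex

section State

variable {A : Type*} [NormedRing A] [NormedAlgebra ℂ A] [StarRing A] {μ : A →L[ℂ] ℂ}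

theorem IsState.conj_apply_of_isSelfAdjoint (hμ : IsState μ) {c : A} (hc : IsSelfAdjoint c) :
    conj (μ c) = μ c := by
  have hexpand : star (1 + c) * (1 + c) = 1 + (c + c) + star c * c := by
    rw [star_add, star_one, hc.star_eq]; noncomm_ring
  have h1 := (hμ.2 (1 + c)).2
  have h2 := (hμ.2 c).2
  rw [hexpand, map_add, map_add, hμ.1] at h1
  rw [conj_eq_iff_im]
  simp only [add_im, one_im, map_add, zero_im] at h1 h2
  linarith

theorem IsState.map_star [StarModule ℂ A] (hμ : IsState μ) (a : A) :
    μ (star a) = conj (μ a) := by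
  have hre := hμ.conj_apply_of_isSelfAdjoint (ℜ a).2
  have him := hμ.conj_apply_of_isSelfAdjoint (ℑ a).2
  rw [← realPart_add_I_smul_imaginaryPart a]
  simp [star_smul, hre, him, (ℜ a).2.star_eq, (ℑ a).2.star_eq]

end State

namespace TensorData

variable {A B T : Type*} [NormedRing A] [NormedAlgebra ℂ A] [StarRing A]
  [NormedRing B] [NormedAlgebra ℂ B] [StarRing B]
  [NormedRing T] [NormedAlgebra ℂ T] [StarRing T] (t : TensorData A B T)

theorem apply_sliceR_eq_apply_sliceL (μ : A →L[ℂ] ℂ) (ν : B →L[ℂ] ℂ) (x : T) :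
    μ (t.sliceR ν x) = ν (t.sliceL μ x) :=
  (t.fmul_sliceR μ ν x).symm.trans (t.fmul_sliceL μ ν x)

theorem sliceR_star [StarModule ℂ A] [StarModule ℂ T] [ContinuousStar A]
    [ContinuousStar T] {ν : B →L[ℂ] ℂ}
    (hν : ∀ b, ν (star b) = conj (ν b)) (x : T) :
    t.sliceR ν (star x) = star (t.sliceR ν x) := by
  refine congrFun (Continuous.ext_on (f := fun x => t.sliceR ν (star x))
    (g := fun x => star (t.sliceR ν x)) t.dense (by fun_prop) (by fun_prop) fun x hx => ?_) x
  induction hx using Submodule.span_induction with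
  | mem x hx =>
    obtain ⟨a, b, rfl⟩ := hx
    simp [t.tmul_star, t.sliceR_apply, hν, star_smul]
  | zero => simp
  | add x y _ _ hx hy => simp_all [star_add]
  | smul c x _ hx => simp_all [star_smul]

end TensorData

section CStarAlgebra

variable {A : Type*} [CStarAlgebra A]

theorem CStarAlgebra.norm_algebraMap_norm_sub_star_mul_self_le (a : A) :
    ‖algebraMap ℝ A ‖star a * a‖ - star a * a‖ ≤ ‖star a * a‖ := by
  let := CStarAlgebra.spectralOrder A
  have := CStarAlgebra.spectralOrderedRing A
  have hpos : 0 ≤ star a * a := star_mul_self_nonneg a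
  have hgap : 0 ≤ algebraMap ℝ A ‖star a * a‖ - star a * a :=
    sub_nonneg.2 hpos.isSelfAdjoint.le_algebraMap_norm_self
  exact (norm_le_iff_le_algebraMap _ (norm_nonneg _) hgap).2 (sub_le_self _ hpos)

section

variable [Nontrivial A]

theorem IsSelfAdjoint.norm_add_algebraMap_I_sq_le {h : A} (hh : IsSelfAdjoint h) (t : ℝ) :
    ‖h + algebraMap ℂ A (t * I)‖ ^ 2 ≤ ‖h‖ ^ 2 + t ^ 2 := by
  set c := algebraMap ℂ A (t * I)
  have hc_star : star c = -c := by
    rw [← algebraMap_star_comm, ← map_neg]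
    congr 1
    simp
  have hc_sq : c * c = -algebraMap ℂ A ((t : ℂ) ^ 2) := by
    rw [← map_mul, ← map_neg]
    congr 1
    linear_combination (t : ℂ) ^ 2 * I_sq
  have hstar_mul : star (h + c) * (h + c) = h * h + algebraMap ℂ A ((t : ℂ) ^ 2) := by
    rw [star_add, hh.star_eq, hc_star, ← sub_eq_add_neg,
      ← (Algebra.commute_algebraMap_right _ h).mul_self_sub_mul_self_eq', hc_sq, sub_neg_eq_add]
  calc ‖h + c‖ ^ 2 = ‖h * h + algebraMap ℂ A ((t : ℂ) ^ 2)‖ := by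
        rw [sq, ← CStarRing.norm_star_mul_self, hstar_mul]
    _ ≤ ‖h‖ ^ 2 + t ^ 2 := by
        refine (norm_add_le _ _).trans (add_le_add ((norm_mul_le h h).trans_eq (sq _).symm) ?_)
        rw [norm_algebraMap', norm_pow, norm_real, Real.norm_eq_abs, sq_abs]

theorem ContinuousLinearMap.im_apply_eq_zero_of_isSelfAdjoint (g : A →L[ℂ] ℂ) (hg1 : g 1 = 1)
    (hg : ‖g‖ ≤ 1) {h : A} (hh : IsSelfAdjoint h) : (g h).im = 0 := by
  set s := (g h).im
  have hbound : ∀ t : ℝ, (s + t) ^ 2 ≤ ‖h‖ ^ 2 + t ^ 2 := fun t => calc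
    (s + t) ^ 2 = (g (h + algebraMap ℂ A (t * I))).im ^ 2 := by
        simp [Algebra.algebraMap_eq_smul_one, hg1, s]
    _ ≤ ‖g (h + algebraMap ℂ A (t * I))‖ ^ 2 := by
        rw [← sq_abs]; gcongr; exact abs_im_le_norm _
    _ ≤ ‖h + algebraMap ℂ A (t * I)‖ ^ 2 := by
        gcongr; exact g.le_of_opNorm_le hg _ |>.trans_eq (one_mul _)
    _ ≤ ‖h‖ ^ 2 + t ^ 2 := hh.norm_add_algebraMap_I_sq_le t
  by_contra hs
  have := hbound ((‖h‖ ^ 2 + 1) / (2 * s))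
  have : 2 * s * ((‖h‖ ^ 2 + 1) / (2 * s)) = ‖h‖ ^ 2 + 1 := by field_simp
  nlinarith [sq_nonneg s]

theorem ContinuousLinearMap.isState_of_norm_le_one (g : A →L[ℂ] ℂ) (hg1 : g 1 = 1)
    (hg : ‖g‖ ≤ 1) : IsState g := by
  refine ⟨hg1, fun a => Complex.le_def.2 ⟨?_, ?_⟩⟩
  · set r := ‖star a * a‖
    have hr : ‖(r : ℂ) - g (star a * a)‖ ≤ r := calc
      ‖(r : ℂ) - g (star a * a)‖ = ‖g (algebraMap ℝ A r - star a * a)‖ := by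
        simp [Algebra.algebraMap_eq_smul_one, hg1]
      _ ≤ ‖algebraMap ℝ A r - star a * a‖ := g.le_of_opNorm_le hg _ |>.trans_eq (one_mul _)
      _ ≤ r := CStarAlgebra.norm_algebraMap_norm_sub_star_mul_self_le a
    simpa using (re_le_norm _).trans hr
  · exact (g.im_apply_eq_zero_of_isSelfAdjoint hg1 hg (.star_mul_self a)).symm

open StarAlgebra in
theorem IsSelfAdjoint.exists_isState_norm_le_norm_apply {x : A} (hx : IsSelfAdjoint x) :
    ∃ φ : A →L[ℂ] ℂ, IsState φ ∧ ‖x‖ ≤ ‖φ x‖ := by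
  have := hx.isStarNormal
  have := elemental.isClosed ℂ x
  obtain ⟨z, hz, hzx⟩ := spectrum.exists_nnnorm_eq_spectralRadius (a := x)
  rw [hx.spectralRadius_eq_nnnorm, ENNReal.coe_inj] at hzx
  let x' : elemental ℂ x := ⟨x, elemental.self_mem ℂ x⟩
  obtain ⟨χ, hχ⟩ := WeakDual.CharacterSpace.mem_spectrum_iff_exists.mp
    (show z ∈ spectrum ℂ x' by rwa [StarSubalgebra.spectrum_eq])
  let ψ : StrongDual ℂ (Subalgebra.toSubmodule (elemental ℂ x).toSubalgebra) :=
    (WeakDual.CharacterSpace.toAlgHom χ).toContinuousLinearMap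
  obtain ⟨φ, hφψ, hφ⟩ := exists_extension_norm_eq _ ψ
  refine ⟨φ, φ.isState_of_norm_le_one ?_ ?_, ?_⟩
  · exact (hφψ ⟨1, (elemental ℂ x).one_mem⟩).trans (map_one (WeakDual.CharacterSpace.toAlgHom χ))
  · rw [hφ]; exact (AlgHom.toContinuousLinearMap_norm _).le
  · rw [hφψ ⟨x, elemental.self_mem ℂ x⟩]
    show ‖x‖ ≤ ‖χ x'‖
    rw [hχ]
    exact_mod_cast hzx.ge

end

theorem IsSelfAdjoint.nnnorm_le_of_forall_isState {x : A}
    (hx : IsSelfAdjoint x) {C : ℝ≥0∞} (h : ∀ φ : A →L[ℂ] ℂ, IsState φ → (‖φ x‖₊ : ℝ≥0∞) ≤ C) :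
    (‖x‖₊ : ℝ≥0∞) ≤ C := by
  nontriviality A
  obtain ⟨φ, hφ, hφx⟩ := hx.exists_isState_norm_le_norm_apply
  exact le_trans (by exact_mod_cast hφx) (h φ hφ)

end CStarAlgebra

theorem stmt12_general {A AA AAA B BA BAA : Type*}
    [NormedRing A] [StarRing A] [NormedAlgebra ℂ A] [StarModule ℂ A]
    [NormedRing AA] [StarRing AA] [NormedAlgebra ℂ AA]
    [NormedRing AAA] [StarRing AAA] [NormedAlgebra ℂ AAA]
    [NormedRing B] [StarRing B] [CStarRing B] [NormedAlgebra ℂ B] [StarModule ℂ B]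
    [CompleteSpace B]
    [NormedRing BA] [StarRing BA] [CStarRing BA] [NormedAlgebra ℂ BA] [StarModule ℂ BA]
    [NormedRing BAA] [StarRing BAA] [NormedAlgebra ℂ BAA]
    (E : ActionData A AA AAA B BA BAA)
    -- the coidentity, a continuous character, with `(id_B ⊗ ε)∘α = id_B`
    (eps : A →L[ℂ] ℂ)
    (heps_alpha : ∀ b : B, E.tBA.sliceR eps (E.alpha b) = b)
    (L : A → ℝ≥0∞)
    (ν : A →L[ℂ] ℂ) (hν : IsState ν)
    (ε₀ : ℝ≥0)
    (happrox : ∀ a : A, (‖eps a - ν a‖₊ : ℝ≥0∞) ≤ (ε₀ : ℝ≥0∞) * L a) :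
    ∀ b : B, star b = b →
      (‖b - E.tBA.sliceR ν (E.alpha b)‖₊ : ℝ≥0∞) ≤
        (ε₀ : ℝ≥0∞) * ⨆ φ : {φ : B →L[ℂ] ℂ // IsState φ},
          L (E.tBA.sliceL (φ : B →L[ℂ] ℂ) (E.alpha b)) := by
  intro b hb
  let : CStarAlgebra B := {}
  have hPb : IsSelfAdjoint (E.tBA.sliceR ν (E.alpha b)) := by
    rw [IsSelfAdjoint, ← E.tBA.sliceR_star hν.map_star, ← map_star, hb]
  refine IsSelfAdjoint.nnnorm_le_of_forall_isState (IsSelfAdjoint.sub hb hPb) fun φ hφ => ?_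
  calc (‖φ (b - E.tBA.sliceR ν (E.alpha b))‖₊ : ℝ≥0∞)
      = ‖eps (E.tBA.sliceL φ (E.alpha b)) - ν (E.tBA.sliceL φ (E.alpha b))‖₊ := by
        rw [map_sub, ← E.tBA.apply_sliceR_eq_apply_sliceL, ← E.tBA.apply_sliceR_eq_apply_sliceL,
          heps_alpha]
    _ ≤ ε₀ * L (E.tBA.sliceL φ (E.alpha b)) := happrox _
    _ ≤ _ := by
        gcongr
        exact le_iSup_of_le (⟨φ, hφ⟩ : {ψ : B →L[ℂ] ℂ // IsState ψ}) le_rfl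

/-- Let `α` be an action of a coamenable compact quantum group `(A, Δ)` on a
unital C*-algebra `B`, with continuous coidentity `ε ∈ S(A)`.  For a state `ν ∈ S(A)` let
`P_ν(b) = (id_B ⊗ ν)α(b)`.  If `L^A` is a right-invariant regular Lip-norm on `A`,
`L^B(b) = sup_{φ∈S(B)} L^A((φ⊗id)α(b))`, and `|ε(a) − ν(a)| ≤ ε₀·L^A(a)` for all `a`, then
for every self-adjoint `b ∈ B`: `‖b − P_ν(b)‖ ≤ ε₀·L^B(b)`. -/
theorem stmt12 {A AA AAA B BA BAA : Type*}
    [NormedRing A] [StarRing A] [CStarRing A] [NormedAlgebra ℂ A] [StarModule ℂ A]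
    [CompleteSpace A]
    [NormedRing AA] [StarRing AA] [CStarRing AA] [NormedAlgebra ℂ AA] [StarModule ℂ AA]
    [CompleteSpace AA]
    [NormedRing AAA] [StarRing AAA] [CStarRing AAA] [NormedAlgebra ℂ AAA]
    [StarModule ℂ AAA] [CompleteSpace AAA]
    [NormedRing B] [StarRing B] [CStarRing B] [NormedAlgebra ℂ B] [StarModule ℂ B]
    [CompleteSpace B]
    [NormedRing BA] [StarRing BA] [CStarRing BA] [NormedAlgebra ℂ BA] [StarModule ℂ BA]
    [CompleteSpace BA]
    [NormedRing BAA] [StarRing BAA] [CStarRing BAA] [NormedAlgebra ℂ BAA]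
    [StarModule ℂ BAA] [CompleteSpace BAA]
    (E : ActionData A AA AAA B BA BAA)
    -- the coidentity, a continuous character, with `(id_B ⊗ ε)∘α = id_B`
    (eps : A →L[ℂ] ℂ) (heps_state : IsState eps)
    (heps_mul : ∀ a a' : A, eps (a * a') = eps a * eps a')
    (heps_counitL : ∀ a : A, E.Q.t.sliceL eps (E.Q.delta a) = a)
    (heps_counitR : ∀ a : A, E.Q.t.sliceR eps (E.Q.delta a) = a)
    (heps_alpha : ∀ b : B, E.tBA.sliceR eps (E.alpha b) = b)
    (L : A → ℝ≥0∞)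
    (hLstar : ∀ a : A, L (star a) = L a)
    (hL0 : ∀ a : A, L a = 0 ↔ ∃ z : ℂ, a = z • (1 : A))
    (hLadd : ∀ a b : A, L (a + b) ≤ L a + L b)
    (hLsmul : ∀ (z : ℂ) (a : A), L (z • a) = (‖z‖₊ : ℝ≥0∞) * L a)
    (hLdense : Dense {a : A | L a < ⊤})
    (hLlsc : LowerSemicontinuous L)
    (hLtb : ∀ ε : ℝ, 0 < ε → ∃ F : Finset A, ∀ a : A, star a = a → L a ≤ 1 →
      ∃ b ∈ F, ∃ t : ℝ, ‖a - b - (t : ℂ) • (1 : A)‖ ≤ ε)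
    -- right-invariance of `L^A`
    (hrinv : ∀ a : A, star a = a → ∀ μ : A →L[ℂ] ℂ, IsState μ →
      L (E.Q.t.sliceL μ (E.Q.delta a)) ≤ L a)
    (ν : A →L[ℂ] ℂ) (hν : IsState ν)
    (ε₀ : ℝ≥0) (hε₀ : 0 < ε₀)
    (happrox : ∀ a : A, (‖eps a - ν a‖₊ : ℝ≥0∞) ≤ (ε₀ : ℝ≥0∞) * L a) :
    ∀ b : B, star b = b →
      (‖b - E.tBA.sliceR ν (E.alpha b)‖₊ : ℝ≥0∞) ≤
        (ε₀ : ℝ≥0∞) * ⨆ φ : {φ : B →L[ℂ] ℂ // IsState φ},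
          L (E.tBA.sliceL (φ : B →L[ℂ] ℂ) (E.alpha b)) :=
  stmt12_general E eps heps_alpha L ν hν ε₀ happrox
end
end
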